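/- arXiv:1808.01781 — 9 statements merged into one kernel-verified Lean document; each statement's English description precedes it below -/
import Mathlib

section
/- Let g be a continuous probability density on (0,∞) with s, τ polynomial functions satisfying (s·g)′(x) = τ(x)g(x) for all x > 0, and assume s(x) > 0 for all x > 0. Let h : (0,∞) → ℝ be bounded and continuous, and set m_h = ∫₀^∞ h(t)g(t) dt. Then the function f_h defined on (0,∞) by f_h(x) = (1/(s(x)g(x))) ∫₀ˣ g(t)(h(t) − m_h) dt is differentiable on (0,∞) and satisfies the Stein equation s(x)f_h′(x) + τ(x)f_h(x) = h(x) − m_h for all x > 0. -/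
open MeasureTheory Set Filter

/-- The function `f_h(x) = (s(x)g(x))⁻¹ ∫₀ˣ g(t)(h(t) − m_h) dt`
is differentiable on `(0,∞)` and solves the Stein equation
`s(x) f_h'(x) + τ(x) f_h(x) = h(x) − m_h`. -/
theorem stein_equation_solution
    (g : ℝ → ℝ) (s τ : Polynomial ℝ)
    (hg_pos : ∀ x ∈ Set.Ioi (0 : ℝ), 0 < g x)
    (hg_cont : ContinuousOn g (Set.Ioi 0))
    (hg_int : ∫ x in Set.Ioi (0 : ℝ), g x = 1)
    (hode : ∀ x ∈ Set.Ioi (0 : ℝ),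
      HasDerivAt (fun y => s.eval y * g y) (τ.eval x * g x) x)
    (hs_pos : ∀ x ∈ Set.Ioi (0 : ℝ), 0 < s.eval x)
    (h : ℝ → ℝ) (hh_cont : ContinuousOn h (Set.Ioi 0))
    (hh_bdd : ∃ C, ∀ x ∈ Set.Ioi (0 : ℝ), |h x| ≤ C) :
    let m := ∫ t in Set.Ioi (0 : ℝ), h t * g t
    let fh : ℝ → ℝ := fun x => (s.eval x * g x)⁻¹ * ∫ t in (0 : ℝ)..x, g t * (h t - m)
    ∀ x ∈ Set.Ioi (0 : ℝ),
      DifferentiableAt ℝ fh x ∧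
      s.eval x * deriv fh x + τ.eval x * fh x = h x - m := by
  intro m fh x hx
  obtain ⟨C, hC⟩ := hh_bdd
  have hx0 : (0 : ℝ) < x := hx
  -- g is integrable on Ioi 0
  have hgi : IntegrableOn g (Set.Ioi (0 : ℝ)) := by
    by_contra hni
    rw [integral_undef hni] at hg_int
    norm_num at hg_int
  -- the integrand
  set φ : ℝ → ℝ := fun t => g t * (h t - m) with hφ
  have hφcont : ContinuousOn φ (Set.Ioi 0) :=
    hg_cont.mul (hh_cont.sub continuousOn_const)
  have hφint : IntegrableOn φ (Set.Ioc 0 x) := by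
    have hsub : Set.Ioc (0:ℝ) x ⊆ Set.Ioi 0 := Set.Ioc_subset_Ioi_self
    refine Integrable.mono' (((hgi.mono_set hsub).const_mul (C + |m|)))
      ((hφcont.mono hsub).aestronglyMeasurable measurableSet_Ioc) ?_
    filter_upwards [ae_restrict_mem measurableSet_Ioc] with t ht
    have hgt := hg_pos t (hsub ht)
    have : |h t - m| ≤ C + |m| := by
      have h1 := abs_sub (h t) m
      have := hC t (hsub ht); linarith
    calc |φ t| = g t * |h t - m| := by
          rw [hφ]; simp [abs_mul, abs_of_pos hgt]
      _ ≤ g t * (C + |m|) := by nlinarith [hgt.le]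
      _ = (C + |m|) * g t := by ring
  have hφiv : IntervalIntegrable φ volume 0 x :=
    (intervalIntegrable_iff_integrableOn_Ioc_of_le hx0.le).mpr hφint
  -- derivative of the integral
  have hF : HasDerivAt (fun u => ∫ t in (0:ℝ)..u, φ t) (φ x) x := by
    refine intervalIntegral.integral_hasDerivAt_right hφiv
      ⟨Set.Ioi 0, Ioi_mem_nhds hx0, hφcont.aestronglyMeasurable measurableSet_Ioi⟩
      (hφcont.continuousAt (Ioi_mem_nhds hx0))
  -- derivative of the inverse factor
  have hs0 : s.eval x ≠ 0 := (hs_pos x hx).ne'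
  have hg0 : g x ≠ 0 := (hg_pos x hx).ne'
  have hsg : s.eval x * g x ≠ 0 := mul_ne_zero hs0 hg0
  have hinv : HasDerivAt (fun y => (s.eval y * g y)⁻¹)
      (-(τ.eval x * g x) / (s.eval x * g x) ^ 2) x :=
    (hode x hx).inv hsg
  set F : ℝ → ℝ := fun u => ∫ t in (0:ℝ)..u, φ t with hFdef
  have hfh : HasDerivAt fh
      (-(τ.eval x * g x) / (s.eval x * g x) ^ 2 * F x + (s.eval x * g x)⁻¹ * φ x) x :=
    hinv.mul hF
  refine ⟨hfh.differentiableAt, ?_⟩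
  rw [hfh.deriv]
  show s.eval x * _ + τ.eval x * ((s.eval x * g x)⁻¹ * F x) = h x - m
  have : φ x = g x * (h x - m) := rfl
  rw [this]
  field_simp
  ring
end

section
/- Let g be a continuous probability density on (0,∞) with s, τ polynomial functions satisfying (s·g)′(x) = τ(x)g(x) for all x > 0 and s(x) > 0 for all x > 0, and assume lim_{x→0⁺} s(x)g(x) = 0. Let h : (0,∞) → ℝ be bounded and continuous and m_h = ∫₀^∞ h(t)g(t) dt. If f : (0,∞) → ℝ is a bounded differentiable solution of the Stein equation s(x)f′(x) + τ(x)f(x) = h(x) − m_h on (0,∞), then for all x > 0, s(x)g(x)f(x) = ∫₀ˣ g(t)(h(t) − m_h) dt (i.e., the additive constant C in the general solution must be 0). -/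
open MeasureTheory Set Filter
open Topology

/-- if moreover `lim_{x→0⁺} s(x)g(x) = 0` and the solution `f` of the Stein
equation is bounded, then `s(x)g(x)f(x) = ∫₀ˣ g(t)(h(t) − m_h) dt` for all `x > 0`
(the additive constant must be `0`). -/
theorem stein_equation_bounded_solution_constant_zero
    (g : ℝ → ℝ) (s τ : Polynomial ℝ)
    (hg_pos : ∀ x ∈ Set.Ioi (0 : ℝ), 0 < g x)
    (hg_cont : ContinuousOn g (Set.Ioi 0))
    (hg_int : ∫ x in Set.Ioi (0 : ℝ), g x = 1)
    (hode : ∀ x ∈ Set.Ioi (0 : ℝ),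
      HasDerivAt (fun y => s.eval y * g y) (τ.eval x * g x) x)
    (hs_pos : ∀ x ∈ Set.Ioi (0 : ℝ), 0 < s.eval x)
    (hsg_lim : Tendsto (fun x => s.eval x * g x) (nhdsWithin 0 (Set.Ioi 0)) (nhds 0))
    (h : ℝ → ℝ) (hh_cont : ContinuousOn h (Set.Ioi 0))
    (hh_bdd : ∃ C, ∀ x ∈ Set.Ioi (0 : ℝ), |h x| ≤ C)
    (m : ℝ) (hm : m = ∫ t in Set.Ioi (0 : ℝ), h t * g t)
    (f : ℝ → ℝ) (hf_bdd : ∃ C, ∀ x ∈ Set.Ioi (0 : ℝ), |f x| ≤ C)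
    (hf_diff : ∀ x ∈ Set.Ioi (0 : ℝ), DifferentiableAt ℝ f x)
    (hf_eq : ∀ x ∈ Set.Ioi (0 : ℝ),
      s.eval x * deriv f x + τ.eval x * f x = h x - m) :
    ∀ x ∈ Set.Ioi (0 : ℝ),
      s.eval x * g x * f x = ∫ t in (0 : ℝ)..x, g t * (h t - m) := by
  intro x hx
  have hx0 : (0:ℝ) < x := hx
  set φ : ℝ → ℝ := fun t => g t * (h t - m) with hφ
  -- g is integrable on Ioi 0
  have hg_meas : AEStronglyMeasurable g (volume.restrict (Ioi (0:ℝ))) :=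
    hg_cont.aestronglyMeasurable measurableSet_Ioi
  have hg_integrable : IntegrableOn g (Ioi (0:ℝ)) := by
    by_contra hc
    rw [MeasureTheory.integral_undef hc] at hg_int
    norm_num at hg_int
  -- φ is integrable on Ioi 0
  obtain ⟨C, hC⟩ := hh_bdd
  have hφ_meas : AEStronglyMeasurable φ (volume.restrict (Ioi (0:ℝ))) := by
    refine ((hg_cont.mul ((hh_cont.sub continuousOn_const))).aestronglyMeasurable
      measurableSet_Ioi)
  have hφ_int : IntegrableOn φ (Ioi (0:ℝ)) := by
    refine Integrable.mono' (hg_integrable.const_mul (C + |m|)) hφ_meas ?_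
    filter_upwards [ae_restrict_mem measurableSet_Ioi] with t ht
    have h1 : |h t - m| ≤ C + |m| := by
      calc |h t - m| ≤ |h t| + |m| := abs_sub _ _
        _ ≤ C + |m| := by have := hC t ht; linarith
    have hg0 : 0 ≤ g t := (hg_pos t ht).le
    calc ‖φ t‖ = g t * |h t - m| := by
          rw [hφ]; simp [Real.norm_eq_abs, abs_mul, abs_of_nonneg hg0]
      _ ≤ g t * (C + |m|) := by nlinarith
      _ = (C + |m|) * g t := by ring
  have hφ_int_Icc : IntegrableOn φ (Icc (0:ℝ) x) := by
    rw [integrableOn_Icc_iff_integrableOn_Ioc]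
    exact hφ_int.mono_set Ioc_subset_Ioi_self
  -- F := s g f has derivative φ on Ioi 0
  have hF : ∀ t ∈ Ioi (0:ℝ),
      HasDerivAt (fun y => s.eval y * g y * f y) (φ t) t := by
    intro t ht
    have hd := (hode t ht).mul (hf_diff t ht).hasDerivAt
    have : τ.eval t * g t * f t + s.eval t * g t * deriv f t = φ t := by
      simp only [hφ]; rw [← hf_eq t ht]; ring
    rw [← this]; exact hd
  -- FTC on [a, x] for a ∈ Ioo 0 x
  have key : ∀ a ∈ Ioo (0:ℝ) x,
      s.eval a * g a * f a = s.eval x * g x * f x - ∫ t in a..x, φ t := by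
    intro a ha
    have hax : a ≤ x := ha.2.le
    have hsub : uIcc a x ⊆ Ioi (0:ℝ) := by
      rw [uIcc_of_le hax]
      intro t ht; exact lt_of_lt_of_le ha.1 ht.1
    have hii : IntervalIntegrable φ volume a x := by
      rw [intervalIntegrable_iff_integrableOn_Ioc_of_le hax]
      exact hφ_int.mono_set (fun t ht => lt_trans ha.1 ht.1)
    have := intervalIntegral.integral_eq_sub_of_hasDerivAt
      (fun t ht => hF t (hsub ht)) hii
    linarith [this]
  -- limits as a → 0⁺
  obtain ⟨D, hD⟩ := hf_bdd
  have hlim1 : Tendsto (fun a => s.eval a * g a * f a) (𝓝[>] (0:ℝ)) (𝓝 0) := by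
    refine Tendsto.zero_mul_isBoundedUnder_le hsg_lim ?_
    refine ⟨D, ?_⟩
    rw [Filter.eventually_map]
    filter_upwards [self_mem_nhdsWithin] with a ha
    simpa [Real.norm_eq_abs] using hD a ha
  have hlim2 : Tendsto (fun a => ∫ t in a..x, φ t) (𝓝[>] (0:ℝ))
      (𝓝 (∫ t in (0:ℝ)..x, φ t)) := by
    have hcont : ContinuousOn (fun a => ∫ t in a..x, φ t) (uIcc 0 x) :=
      intervalIntegral.continuousOn_primitive_interval_left
        (by rwa [uIcc_of_le hx0.le])
    have h0 : (0:ℝ) ∈ uIcc 0 x := left_mem_uIcc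
    have h1 := (hcont 0 h0).tendsto
    have hsub2 : Ioo (0:ℝ) x ⊆ uIcc 0 x := by
      rw [uIcc_of_le hx0.le]; exact Ioo_subset_Icc_self
    have h2 := h1.mono_left (nhdsWithin_mono 0 hsub2)
    rwa [nhdsWithin_Ioo_eq_nhdsGT hx0] at h2
  have hlim3 : Tendsto (fun a => s.eval x * g x * f x - ∫ t in a..x, φ t)
      (𝓝[>] (0:ℝ)) (𝓝 (s.eval x * g x * f x - ∫ t in (0:ℝ)..x, φ t)) :=
    tendsto_const_nhds.sub hlim2
  have heq : (fun a => s.eval a * g a * f a) =ᶠ[𝓝[>] (0:ℝ)]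
      (fun a => s.eval x * g x * f x - ∫ t in a..x, φ t) := by
    filter_upwards [Ioo_mem_nhdsGT_of_mem (Set.left_mem_Ico.mpr hx0)] with a ha
    exact key a ha
  have := tendsto_nhds_unique (hlim1.congr' heq) hlim3
  linarith [this]
end

section
/- Let g be a continuous probability density on (0,∞) with s, τ polynomial functions satisfying (s·g)′(x) = τ(x)g(x) for all x > 0, s(x) > 0 for all x > 0, τ strictly decreasing on (0,∞) with a unique zero α ∈ (0,∞), and lim_{t→0⁺} s(t)g(t) = 0. Then for every x with 0 < x < α, ∫₀ˣ g(t) dt ≤ s(x)g(x)/τ(x). -/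
open MeasureTheory Set Filter

/-- (Lemma, first half) for `0 < x < α`, `∫₀ˣ g(t) dt ≤ s(x)g(x)/τ(x)`. -/
theorem stein_lemma_left_tail_bound
    (g : ℝ → ℝ) (s τ : Polynomial ℝ)
    (hg_pos : ∀ x ∈ Set.Ioi (0 : ℝ), 0 < g x)
    (hg_cont : ContinuousOn g (Set.Ioi 0))
    (hg_int : ∫ x in Set.Ioi (0 : ℝ), g x = 1)
    (hode : ∀ x ∈ Set.Ioi (0 : ℝ),
      HasDerivAt (fun y => s.eval y * g y) (τ.eval x * g x) x)
    (hs_pos : ∀ x ∈ Set.Ioi (0 : ℝ), 0 < s.eval x)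
    (hτ_anti : StrictAntiOn (fun x => τ.eval x) (Set.Ioi 0))
    (α : ℝ) (hα_pos : 0 < α) (hα_zero : τ.eval α = 0)
    (hα_unique : ∀ x ∈ Set.Ioi (0 : ℝ), τ.eval x = 0 → x = α)
    (hsg_lim : Tendsto (fun t => s.eval t * g t) (nhdsWithin 0 (Set.Ioi 0)) (nhds 0)) :
    ∀ x, 0 < x → x < α →
      (∫ t in (0 : ℝ)..x, g t) ≤ s.eval x * g x / τ.eval x := by
  intro x hx0 hxα
  have hτx : 0 < τ.eval x := by
    have := hτ_anti (Set.mem_Ioi.mpr hx0) (Set.mem_Ioi.mpr hα_pos) hxα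
    simpa [hα_zero] using this
  -- key inequality for a ∈ (0, x)
  have key : ∀ a ∈ Set.Ioo (0:ℝ) x,
      τ.eval x * ∫ t in a..x, g t ≤ s.eval x * g x := by
    rintro a ⟨ha0, hax⟩
    have hsub : Set.uIcc a x ⊆ Set.Ioi 0 := by
      rw [Set.uIcc_of_le hax.le]
      intro t ht
      exact lt_of_lt_of_le ha0 ht.1
    have hgc : ContinuousOn g (Set.uIcc a x) := hg_cont.mono hsub
    have hgi : IntervalIntegrable g volume a x := hgc.intervalIntegrable
    have hτgc : ContinuousOn (fun t => τ.eval t * g t) (Set.uIcc a x) :=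
      (Polynomial.continuous τ).continuousOn.mul hgc
    have hτgi : IntervalIntegrable (fun t => τ.eval t * g t) volume a x :=
      hτgc.intervalIntegrable
    have hftc : ∫ t in a..x, τ.eval t * g t = s.eval x * g x - s.eval a * g a :=
      intervalIntegral.integral_eq_sub_of_hasDerivAt
        (fun t ht => hode t (hsub ht)) hτgi
    have hmono : (∫ t in a..x, τ.eval x * g t) ≤ ∫ t in a..x, τ.eval t * g t := by
      apply intervalIntegral.integral_mono_on hax.le (hgi.const_mul _) hτgi
      intro t ht
      have ht0 : t ∈ Set.Ioi (0:ℝ) := lt_of_lt_of_le ha0 ht.1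
      have hg0 := (hg_pos t ht0).le
      rcases eq_or_lt_of_le ht.2 with h | h
      · simp [h]
      · exact mul_le_mul_of_nonneg_right (hτ_anti ht0 (Set.mem_Ioi.mpr hx0) h).le hg0
    have hsa : 0 ≤ s.eval a * g a :=
      le_of_lt (mul_pos (hs_pos a ha0) (hg_pos a ha0))
    calc τ.eval x * ∫ t in a..x, g t = ∫ t in a..x, τ.eval x * g t := by
          rw [intervalIntegral.integral_const_mul]
      _ ≤ ∫ t in a..x, τ.eval t * g t := hmono
      _ = s.eval x * g x - s.eval a * g a := hftc
      _ ≤ s.eval x * g x := by linarith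
  -- integrability of g on Icc 0 x
  have hgint : IntegrableOn g (Set.Ioi 0) := by
    by_contra h
    rw [MeasureTheory.integral_undef h] at hg_int
    norm_num at hg_int
  have hgicc : IntervalIntegrable g volume 0 x := by
    rw [intervalIntegrable_iff_integrableOn_Ioc_of_le hx0.le]
    exact hgint.mono_set Set.Ioc_subset_Ioi_self
  -- continuity of the primitive a ↦ ∫ 0..a
  have hcont : ContinuousOn (fun a => ∫ t in (0:ℝ)..a, g t) (Set.uIcc 0 x) :=
    intervalIntegral.continuousOn_primitive_interval' hgicc Set.left_mem_uIcc
  have hcw : ContinuousWithinAt (fun a => ∫ t in (0:ℝ)..a, g t) (Set.uIcc 0 x) 0 :=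
    hcont 0 Set.left_mem_uIcc
  have hzero : (∫ t in (0:ℝ)..(0:ℝ), g t) = 0 := intervalIntegral.integral_same
  -- tendsto along 𝓝[>] 0
  have hle : nhdsWithin (0:ℝ) (Set.Ioi 0) ≤ nhdsWithin 0 (Set.uIcc 0 x) := by
    rw [Set.uIcc_of_le hx0.le, ← nhdsWithin_Ioc_eq_nhdsGT hx0]
    exact nhdsWithin_mono _ Set.Ioc_subset_Icc_self
  have htend0 : Tendsto (fun a => ∫ t in (0:ℝ)..a, g t)
      (nhdsWithin (0:ℝ) (Set.Ioi 0)) (nhds 0) := by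
    have := hcw.tendsto.mono_left hle
    rwa [hzero] at this
  have hsplit : ∀ a ∈ Set.Ioo (0:ℝ) x,
      (∫ t in a..x, g t) = (∫ t in (0:ℝ)..x, g t) - ∫ t in (0:ℝ)..a, g t := by
    rintro a ⟨ha0, hax⟩
    have h1 : IntervalIntegrable g volume 0 a := by
      apply hgicc.mono_set
      rw [Set.uIcc_of_le ha0.le, Set.uIcc_of_le hx0.le]
      exact Set.Icc_subset_Icc le_rfl hax.le
    have h2 : IntervalIntegrable g volume a x := by
      apply hgicc.mono_set
      rw [Set.uIcc_of_le hax.le, Set.uIcc_of_le hx0.le]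
      exact Set.Icc_subset_Icc ha0.le le_rfl
    rw [← intervalIntegral.integral_add_adjacent_intervals h1 h2]
    ring
  have htend : Tendsto (fun a => τ.eval x * ∫ t in a..x, g t)
      (nhdsWithin (0:ℝ) (Set.Ioi 0)) (nhds (τ.eval x * ∫ t in (0:ℝ)..x, g t)) := by
    have h1 : Tendsto (fun a => τ.eval x * ((∫ t in (0:ℝ)..x, g t) - ∫ t in (0:ℝ)..a, g t))
        (nhdsWithin (0:ℝ) (Set.Ioi 0)) (nhds (τ.eval x * ((∫ t in (0:ℝ)..x, g t) - 0))) :=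
      (tendsto_const_nhds.sub htend0).const_mul _
    rw [sub_zero] at h1
    apply h1.congr'
    filter_upwards [Ioo_mem_nhdsGT_of_mem (Set.left_mem_Ico.mpr hx0)] with a ha
    rw [hsplit a ha]
  have hfinal : τ.eval x * ∫ t in (0:ℝ)..x, g t ≤ s.eval x * g x := by
    refine le_of_tendsto htend ?_
    filter_upwards [Ioo_mem_nhdsGT_of_mem (Set.left_mem_Ico.mpr hx0)] with a ha
    exact key a ha
  rw [le_div_iff₀ hτx]
  linarith [hfinal]
end

section
/- Let g be a continuous probability density on (0,∞) with s, τ polynomial functions satisfying (s·g)′(x) = τ(x)g(x) for all x > 0, s(x) > 0 for all x > 0, τ strictly decreasing on (0,∞) with a unique zero α ∈ (0,∞), and lim_{t→∞} s(t)g(t) = 0. Then for every x > α, ∫ₓ^∞ g(t) dt ≤ −s(x)g(x)/τ(x). -/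
open MeasureTheory Set Filter

/-- (Lemma, second half) for `x > α`, `∫ₓ^∞ g(t) dt ≤ −s(x)g(x)/τ(x)`. -/
theorem stein_lemma_right_tail_bound
    (g : ℝ → ℝ) (s τ : Polynomial ℝ)
    (hg_pos : ∀ x ∈ Set.Ioi (0 : ℝ), 0 < g x)
    (hg_cont : ContinuousOn g (Set.Ioi 0))
    (hg_int : ∫ x in Set.Ioi (0 : ℝ), g x = 1)
    (hode : ∀ x ∈ Set.Ioi (0 : ℝ),
      HasDerivAt (fun y => s.eval y * g y) (τ.eval x * g x) x)
    (hs_pos : ∀ x ∈ Set.Ioi (0 : ℝ), 0 < s.eval x)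
    (hτ_anti : StrictAntiOn (fun x => τ.eval x) (Set.Ioi 0))
    (α : ℝ) (hα_pos : 0 < α) (hα_zero : τ.eval α = 0)
    (hα_unique : ∀ x ∈ Set.Ioi (0 : ℝ), τ.eval x = 0 → x = α)
    (hsg_lim : Tendsto (fun t => s.eval t * g t) atTop (nhds 0)) :
    ∀ x, α < x →
      (∫ t in Set.Ioi x, g t) ≤ -(s.eval x * g x) / τ.eval x := by
  intro x hx
  have hx0 : (0:ℝ) < x := hα_pos.trans hx
  have hτx : τ.eval x < 0 := by
    have := hτ_anti (Set.mem_Ioi.mpr hα_pos) (Set.mem_Ioi.mpr hx0) hx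
    simpa [hα_zero] using this
  have hgint0 : IntegrableOn g (Set.Ioi 0) := by
    by_contra h
    rw [MeasureTheory.integral_undef h] at hg_int
    norm_num at hg_int
  have hgint : IntegrableOn g (Set.Ioi x) :=
    hgint0.mono_set (Set.Ioi_subset_Ioi hx0.le)
  have key : ∀ N, x ≤ N →
      (∫ t in x..N, g t) ≤ (s.eval N * g N - s.eval x * g x) / τ.eval x := by
    intro N hN
    have hsub : Set.uIcc x N ⊆ Set.Ioi 0 := by
      rw [Set.uIcc_of_le hN]
      intro t ht
      exact lt_of_lt_of_le hx0 ht.1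
    have hgcontI : ContinuousOn g (Set.uIcc x N) := hg_cont.mono hsub
    have hcont : ContinuousOn (fun t => τ.eval t * g t) (Set.uIcc x N) :=
      (τ.continuous_aeval.continuousOn.mul hgcontI)
    have hftc : ∫ t in x..N, τ.eval t * g t = s.eval N * g N - s.eval x * g x := by
      apply intervalIntegral.integral_eq_sub_of_hasDerivAt
      · intro t ht
        exact hode t (hsub ht)
      · exact hcont.intervalIntegrable
    have hmono : (∫ t in x..N, τ.eval t * g t) ≤ ∫ t in x..N, τ.eval x * g t := by
      apply intervalIntegral.integral_mono_on hN hcont.intervalIntegrable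
      · exact (hgcontI.const_smul (τ.eval x)).intervalIntegrable
      · intro t ht
        have ht0 : t ∈ Set.Ioi (0:ℝ) := hsub (by rw [Set.uIcc_of_le hN]; exact ht)
        have hτt : τ.eval t ≤ τ.eval x :=
          (hτ_anti.antitoneOn (Set.mem_Ioi.mpr hx0) ht0) ht.1
        exact mul_le_mul_of_nonneg_right hτt (hg_pos t ht0).le
    rw [intervalIntegral.integral_const_mul] at hmono
    rw [hftc] at hmono
    rw [le_div_iff_of_neg hτx]
    linarith [hmono]
  have hlim1 : Tendsto (fun N => ∫ t in x..N, g t) atTop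
      (nhds (∫ t in Set.Ioi x, g t)) :=
    MeasureTheory.intervalIntegral_tendsto_integral_Ioi x hgint tendsto_id
  have hlim2 : Tendsto (fun N => (s.eval N * g N - s.eval x * g x) / τ.eval x) atTop
      (nhds (-(s.eval x * g x) / τ.eval x)) := by
    have := (hsg_lim.sub (tendsto_const_nhds (x := s.eval x * g x))).div_const (τ.eval x)
    simpa using this
  exact le_of_tendsto_of_tendsto hlim1 hlim2
    (eventually_atTop.mpr ⟨x, fun N hN => key N hN⟩)
end

section
/- Let g be a continuous probability density on (0,∞) with s, τ polynomial functions satisfying (s·g)′(x) = τ(x)g(x) for all x > 0, s(x) > 0 for all x > 0, τ strictly decreasing on (0,∞) with a unique zero α ∈ (0,∞), and lim_{t→0⁺} s(t)g(t) = 0. Then the function l(x) = (1/(s(x)g(x))) ∫₀ˣ g(t) dt is nondecreasing on (0, α]; in particular, for all 0 < x ≤ α, (1/(s(x)g(x))) ∫₀ˣ g(t) dt ≤ (1/(s(α)g(α))) ∫₀^α g(t) dt. -/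
open MeasureTheory Set Filter

/-- the function `l(x) = (s(x)g(x))⁻¹ ∫₀ˣ g(t) dt` is nondecreasing on
`(0, α]`; in particular `l(x) ≤ l(α)` for `0 < x ≤ α`. -/
theorem stein_l_monotone
    (g : ℝ → ℝ) (s τ : Polynomial ℝ)
    (hg_pos : ∀ x ∈ Set.Ioi (0 : ℝ), 0 < g x)
    (hg_cont : ContinuousOn g (Set.Ioi 0))
    (hg_int : ∫ x in Set.Ioi (0 : ℝ), g x = 1)
    (hode : ∀ x ∈ Set.Ioi (0 : ℝ),
      HasDerivAt (fun y => s.eval y * g y) (τ.eval x * g x) x)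
    (hs_pos : ∀ x ∈ Set.Ioi (0 : ℝ), 0 < s.eval x)
    (hτ_anti : StrictAntiOn (fun x => τ.eval x) (Set.Ioi 0))
    (α : ℝ) (hα_pos : 0 < α) (hα_zero : τ.eval α = 0)
    (hα_unique : ∀ x ∈ Set.Ioi (0 : ℝ), τ.eval x = 0 → x = α)
    (hsg_lim : Tendsto (fun t => s.eval t * g t) (nhdsWithin 0 (Set.Ioi 0)) (nhds 0)) :
    MonotoneOn (fun x => (s.eval x * g x)⁻¹ * ∫ t in (0 : ℝ)..x, g t) (Set.Ioc 0 α) ∧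
    ∀ x, 0 < x → x ≤ α →
      (s.eval x * g x)⁻¹ * (∫ t in (0 : ℝ)..x, g t) ≤
        (s.eval α * g α)⁻¹ * ∫ t in (0 : ℝ)..α, g t := by
  -- integrability of g on (0,∞)
  have hg_intOn : IntegrableOn g (Set.Ioi 0) := by
    by_contra h
    rw [integral_undef h] at hg_int
    norm_num at hg_int
  set F : ℝ → ℝ := fun x => s.eval x * g x with hF
  set G : ℝ → ℝ := fun x => ∫ t in (0 : ℝ)..x, g t with hGdef
  have hF_pos : ∀ x, 0 < x → 0 < F x := fun x hx =>
    mul_pos (hs_pos x hx) (hg_pos x hx)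
  have hii : ∀ a b : ℝ, 0 ≤ a → 0 ≤ b → IntervalIntegrable g volume a b := by
    intro a b ha hb
    rw [intervalIntegrable_iff]
    exact hg_intOn.mono_set (fun t ht =>
      lt_of_le_of_lt (le_min ha hb) ht.1)
  -- derivative of G
  have hGderiv : ∀ x : ℝ, 0 < x → HasDerivAt G (g x) x := by
    intro x hx
    exact intervalIntegral.integral_hasDerivAt_right (hii 0 x le_rfl hx.le)
      (hg_cont.stronglyMeasurableAtFilter isOpen_Ioi x hx)
      (hg_cont.continuousAt (Ioi_mem_nhds hx))
  -- G tends to 0 at 0⁺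
  have hG_lim : Tendsto G (nhdsWithin 0 (Set.Ioi 0)) (nhds 0) := by
    have hint : IntegrableOn g (Set.uIcc 0 α) := by
      rw [uIcc_of_le hα_pos.le]
      rw [integrableOn_Icc_iff_integrableOn_Ioc]
      exact hg_intOn.mono_set Ioc_subset_Ioi_self
    have hc : ContinuousOn G (Set.uIcc 0 α) :=
      intervalIntegral.continuousOn_primitive_interval hint
    have h0 : (0:ℝ) ∈ Set.uIcc 0 α := left_mem_uIcc
    have := (hc 0 h0).tendsto
    rw [show G 0 = 0 from intervalIntegral.integral_same] at this
    have hmono : nhdsWithin (0:ℝ) (Set.Ioi 0) ≤ nhdsWithin 0 (Set.uIcc 0 α) := by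
      rw [← nhdsWithin_Ioc_eq_nhdsGT hα_pos]
      exact nhdsWithin_mono _ (by rw [uIcc_of_le hα_pos.le]; exact Ioc_subset_Icc_self)
    exact this.mono_left hmono
  -- Key inequality : τ(x) G(x) ≤ F(x) for x ∈ (0, α)
  have hkey : ∀ x : ℝ, 0 < x → τ.eval x * G x ≤ F x := by
    intro x hx
    -- the auxiliary function h t = F t - τ(x) G t is monotone on (0, x]
    set h : ℝ → ℝ := fun t => F t - τ.eval x * G t with hh
    have hderiv : ∀ t : ℝ, 0 < t →
        HasDerivAt h (τ.eval t * g t - τ.eval x * g t) t := fun t ht =>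
      (hode t ht).sub ((hGderiv t ht).const_mul (τ.eval x))
    have hmono : MonotoneOn h (Set.Ioc 0 x) := by
      apply monotoneOn_of_deriv_nonneg (convex_Ioc 0 x)
      · exact fun t ht => (hderiv t ht.1).continuousAt.continuousWithinAt
      · rw [interior_Ioc]
        exact fun t ht => (hderiv t ht.1).differentiableAt.differentiableWithinAt
      · rw [interior_Ioc]
        intro t ht
        rw [(hderiv t ht.1).deriv]
        have hτ : τ.eval x ≤ τ.eval t :=
          (hτ_anti.antitoneOn ht.1 hx ht.2.le)
        have := (hg_pos t ht.1)
        nlinarith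
    -- take limit a → 0⁺ of h a ≤ h x
    have hlim : Tendsto h (nhdsWithin 0 (Set.Ioi 0)) (nhds 0) := by
      have := hsg_lim.sub (hG_lim.const_mul (τ.eval x))
      simpa using this
    have hev : ∀ᶠ a in nhdsWithin (0:ℝ) (Set.Ioi 0), h a ≤ h x := by
      filter_upwards [Ioo_mem_nhdsGT_of_mem (Set.mem_Ico.2 ⟨le_rfl, hx⟩)] with a ha
      exact hmono (Set.mem_Ioc.2 ⟨ha.1, ha.2.le⟩) (Set.mem_Ioc.2 ⟨hx, le_rfl⟩) ha.2.le
    have h0 : (0:ℝ) ≤ h x := le_of_tendsto hlim hev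
    simpa [hh, sub_nonneg] using h0
  -- monotonicity of l
  have hlderiv : ∀ x : ℝ, 0 < x →
      HasDerivAt (fun y => (F y)⁻¹ * G y)
        (-(τ.eval x * g x) / F x ^ 2 * G x + (F x)⁻¹ * g x) x := by
    intro x hx
    exact ((hode x hx).inv (hF_pos x hx).ne').mul (hGderiv x hx)
  have hmain : MonotoneOn (fun x => (F x)⁻¹ * G x) (Set.Ioc 0 α) := by
    apply monotoneOn_of_deriv_nonneg (convex_Ioc 0 α)
    · exact fun x hx => (hlderiv x hx.1).continuousAt.continuousWithinAt
    · rw [interior_Ioc]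
      exact fun x hx => (hlderiv x hx.1).differentiableAt.differentiableWithinAt
    · rw [interior_Ioc]
      intro x hx
      rw [(hlderiv x hx.1).deriv]
      have hFx := hF_pos x hx.1
      have hgx := hg_pos x hx.1
      have hk := hkey x hx.1
      have heq : -(τ.eval x * g x) / F x ^ 2 * G x + (F x)⁻¹ * g x
          = g x * (F x - τ.eval x * G x) / F x ^ 2 := by
        field_simp
        ring
      rw [heq]
      exact div_nonneg (mul_nonneg hgx.le (sub_nonneg.2 hk)) (sq_nonneg _)
  refine ⟨hmain, fun x hx hxα => ?_⟩
  exact hmain (Set.mem_Ioc.2 ⟨hx, hxα⟩) (Set.mem_Ioc.2 ⟨hα_pos, le_rfl⟩) hxα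
end

section
/- Let g be a continuous probability density on (0,∞) with s, τ polynomial functions satisfying (s·g)′(x) = τ(x)g(x) for all x > 0, s(x) > 0 for all x > 0, τ strictly decreasing on (0,∞) with a unique zero α ∈ (0,∞), and lim_{t→∞} s(t)g(t) = 0. Then the function u(x) = (1/(s(x)g(x))) ∫ₓ^∞ g(t) dt is nonincreasing on [α, ∞); in particular, for all x ≥ α, (1/(s(x)g(x))) ∫ₓ^∞ g(t) dt ≤ (1/(s(α)g(α))) ∫_α^∞ g(t) dt. -/
open MeasureTheory Set Filter

/-- the function `u(x) = (s(x)g(x))⁻¹ ∫ₓ^∞ g(t) dt` is nonincreasing on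
`[α, ∞)`; in particular `u(x) ≤ u(α)` for `x ≥ α`. -/
theorem stein_u_antitone
    (g : ℝ → ℝ) (s τ : Polynomial ℝ)
    (hg_pos : ∀ x ∈ Set.Ioi (0 : ℝ), 0 < g x)
    (hg_cont : ContinuousOn g (Set.Ioi 0))
    (hg_int : ∫ x in Set.Ioi (0 : ℝ), g x = 1)
    (hode : ∀ x ∈ Set.Ioi (0 : ℝ),
      HasDerivAt (fun y => s.eval y * g y) (τ.eval x * g x) x)
    (hs_pos : ∀ x ∈ Set.Ioi (0 : ℝ), 0 < s.eval x)
    (hτ_anti : StrictAntiOn (fun x => τ.eval x) (Set.Ioi 0))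
    (α : ℝ) (hα_pos : 0 < α) (hα_zero : τ.eval α = 0)
    (hα_unique : ∀ x ∈ Set.Ioi (0 : ℝ), τ.eval x = 0 → x = α)
    (hsg_lim : Tendsto (fun t => s.eval t * g t) atTop (nhds 0)) :
    AntitoneOn (fun x => (s.eval x * g x)⁻¹ * ∫ t in Set.Ioi x, g t) (Set.Ici α) ∧
    ∀ x, α ≤ x →
      (s.eval x * g x)⁻¹ * (∫ t in Set.Ioi x, g t) ≤
        (s.eval α * g α)⁻¹ * ∫ t in Set.Ioi α, g t := by
  set F : ℝ → ℝ := fun x => ∫ t in Set.Ioi x, g t with hF_def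
  have hgint0 : IntegrableOn g (Set.Ioi 0) := integrable_of_integral_eq_one hg_int
  have hgintx : ∀ x : ℝ, 0 < x → IntegrableOn g (Set.Ioi x) := fun x hx =>
    hgint0.mono_set (Ioi_subset_Ioi hx.le)
  have hτ_nonpos : ∀ t : ℝ, α ≤ t → τ.eval t ≤ 0 := by
    intro t ht
    rcases ht.eq_or_lt with rfl | h
    · exact le_of_eq hα_zero
    · have := hτ_anti hα_pos (hα_pos.trans h) h
      simpa [hα_zero] using this.le
  -- identity : s x * g x = ∫_{Ioi x} -(τ t * g t), and integrability
  have hid : ∀ x : ℝ, α ≤ x →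
      (∫ t in Set.Ioi x, τ.eval t * g t) = -(s.eval x * g x) ∧
      IntegrableOn (fun t => τ.eval t * g t) (Set.Ioi x) := by
    intro x hx
    have hx0 : 0 < x := hα_pos.trans_le hx
    have hderiv : ∀ y ∈ Set.Ici x, HasDerivAt (fun y => s.eval y * g y) (τ.eval y * g y) y :=
      fun y hy => hode y (hx0.trans_le hy)
    have hneg : ∀ y ∈ Set.Ioi x, τ.eval y * g y ≤ 0 := fun y hy =>
      mul_nonpos_of_nonpos_of_nonneg (hτ_nonpos y (hx.trans hy.out.le))
        (hg_pos y (hx0.trans hy.out)).le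
    constructor
    · have := integral_Ioi_of_hasDerivAt_of_nonpos' hderiv hneg hsg_lim
      simpa using this
    · exact integrableOn_Ioi_deriv_of_nonpos' hderiv hneg hsg_lim
  -- key inequality : (-τ x) * F x ≤ s x * g x for x ≥ α
  have key : ∀ x : ℝ, α ≤ x → -τ.eval x * F x ≤ s.eval x * g x := by
    intro x hx
    have hx0 : 0 < x := hα_pos.trans_le hx
    have h1 : -τ.eval x * F x = ∫ t in Set.Ioi x, -τ.eval x * g t := by
      rw [hF_def, integral_const_mul]
    have h2 : s.eval x * g x = ∫ t in Set.Ioi x, -(τ.eval t * g t) := by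
      rw [integral_neg, (hid x hx).1, neg_neg]
    rw [h1, h2]
    apply setIntegral_mono_on ((hgintx x hx0).const_mul _) (hid x hx).2.neg measurableSet_Ioi
    intro t ht
    have hτle : τ.eval t ≤ τ.eval x := by
      rcases eq_or_lt_of_le ht.out.le with rfl | h
      · exact le_refl _
      · exact (hτ_anti hx0 (hx0.trans h) h).le
    simp only [Pi.neg_apply, ← neg_mul]
    exact mul_le_mul_of_nonneg_right (by linarith) (hg_pos t (hx0.trans ht.out)).le
  -- derivative of F
  have hFderiv : ∀ x : ℝ, α ≤ x → HasDerivAt F (-(g x)) x := by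
    intro x hx
    have hx0 : 0 < x := hα_pos.trans_le hx
    set c : ℝ := α / 2 with hc_def
    have hc0 : 0 < c := by positivity
    have hcx : c < x := by
      have : c < α := by simp [hc_def]; linarith
      linarith
    have hInt : IntervalIntegrable g volume c x := by
      rw [intervalIntegrable_iff_integrableOn_Ioc_of_le hcx.le]
      exact hgint0.mono_set (fun t ht => hc0.trans ht.1)
    have hmeas : StronglyMeasurableAtFilter g (nhds x) :=
      ⟨Set.Ioi 0, isOpen_Ioi.mem_nhds hx0, hg_cont.aestronglyMeasurable measurableSet_Ioi⟩
    have hcontx : ContinuousAt g x := hg_cont.continuousAt (isOpen_Ioi.mem_nhds hx0)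
    have hprim : HasDerivAt (fun y => (∫ t in Set.Ioi c, g t) - ∫ t in c..y, g t)
        (-(g x)) x :=
      ((intervalIntegral.integral_hasDerivAt_right hInt hmeas hcontx).const_sub _)
    apply hprim.congr_of_eventuallyEq
    filter_upwards [isOpen_Ioi.mem_nhds (show x ∈ Set.Ioi c from hcx)] with y hy
    have hy0 : (0:ℝ) < y := hc0.trans hy.out
    have hsplit : (∫ t in Set.Ioi c, g t)
        = (∫ t in Set.Ioc c y, g t) + ∫ t in Set.Ioi y, g t := by
      rw [← setIntegral_union (Set.Ioc_disjoint_Ioi le_rfl) measurableSet_Ioi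
        (hgint0.mono_set (fun t ht => hc0.trans ht.1)) (hgintx y hy0),
        Set.Ioc_union_Ioi_eq_Ioi hy.out.le]
    rw [hF_def]
    simp only
    rw [hsplit, intervalIntegral.integral_of_le hy.out.le]
    ring
  -- derivative of u and its sign
  have hu : ∀ x : ℝ, α ≤ x → HasDerivAt
      (fun y => (s.eval y * g y)⁻¹ * F y)
      (-(τ.eval x * g x) / (s.eval x * g x) ^ 2 * F x + (s.eval x * g x)⁻¹ * -(g x)) x := by
    intro x hx
    have hx0 : 0 < x := hα_pos.trans_le hx
    have hbpos : 0 < s.eval x * g x := mul_pos (hs_pos x hx0) (hg_pos x hx0)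
    exact ((hode x hx0).inv hbpos.ne').mul (hFderiv x hx)
  have hsign : ∀ x : ℝ, α ≤ x →
      -(τ.eval x * g x) / (s.eval x * g x) ^ 2 * F x + (s.eval x * g x)⁻¹ * -(g x) ≤ 0 := by
    intro x hx
    have hx0 : 0 < x := hα_pos.trans_le hx
    have hbpos : 0 < s.eval x * g x := mul_pos (hs_pos x hx0) (hg_pos x hx0)
    have hgx : 0 < g x := hg_pos x hx0
    have hkey := key x hx
    have heq : -(τ.eval x * g x) / (s.eval x * g x) ^ 2 * F x + (s.eval x * g x)⁻¹ * -(g x)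
        = -(g x * (τ.eval x * F x + s.eval x * g x)) / (s.eval x * g x) ^ 2 := by
      field_simp
      ring
    rw [heq]
    apply div_nonpos_of_nonpos_of_nonneg _ (sq_nonneg _)
    apply neg_nonpos_of_nonneg
    apply mul_nonneg hgx.le
    nlinarith
  have hanti : AntitoneOn (fun x => (s.eval x * g x)⁻¹ * ∫ t in Set.Ioi x, g t) (Set.Ici α) := by
    apply antitoneOn_of_deriv_nonpos (convex_Ici α)
    · exact fun x hx => ((hu x hx).continuousAt).continuousWithinAt
    · intro x hx
      rw [interior_Ici] at hx
      exact ((hu x hx.out.le).differentiableAt).differentiableWithinAt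
    · intro x hx
      rw [interior_Ici] at hx
      rw [(hu x hx.out.le).deriv]
      exact hsign x hx.out.le
  exact ⟨hanti, fun x hx => hanti self_mem_Ici hx hx⟩
end

section
/- Let g be a continuous probability density on (0,∞) with s, τ polynomial functions satisfying (s·g)′(x) = τ(x)g(x) for all x > 0, s(x) > 0 for all x > 0, τ strictly decreasing on (0,∞) with a unique zero α ∈ (0,∞), and lim_{t→0⁺} s(t)g(t) = lim_{t→∞} s(t)g(t) = 0. Let h : (0,∞) → ℝ be bounded and continuous, m_h = ∫₀^∞ h(t)g(t) dt, and f_h(x) = (1/(s(x)g(x))) ∫₀ˣ g(t)(h(t) − m_h) dt. Then sup_{x>0} |f_h(x)| ≤ M · sup_{x>0} |h(x) − m_h|, where M = max( (1/(s(α)g(α))) ∫₀^α g(t) dt , (1/(s(α)g(α))) ∫_α^∞ g(t) dt ). -/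
/-!
Write `p = s g`, `G x = ∫₀ˣ g` and `T x = ∫ₓ^∞ g`. The numerator of `f_h x` is bounded by
`B G x`, and, since `g (h - m_h)` has total integral zero, also by `B T x`. It therefore suffices
that `G / p` is maximal on `(0, α]` at `α` and that `T / p` is maximal on `[α, ∞)` at `α`.
For `G`, the function `Φ = G α · p - p α · G` has derivative `g (G α τ - p α)`, whose second
factor is antitone: `Φ` first increases and then decreases, and it vanishes at `0⁺` and at `α`,
so it is nonnegative in between. The tail `T` is handled in the same way, with the limit at `∞`
in place of `0⁺`.
-/

open MeasureTheory Set Filter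

open scoped Topology

theorem min_le_of_hasDerivAt_mul_antitoneOn {F w ψ : ℝ → ℝ} {a b y : ℝ} (hy : y ∈ Icc a b)
    (hF : ∀ x ∈ Icc a b, HasDerivAt F (w x * ψ x) x) (hw : ∀ x ∈ Icc a b, 0 ≤ w x)
    (hψ : AntitoneOn ψ (Icc a b)) : min (F a) (F b) ≤ F y := by
  have hcont : ∀ c d, Icc c d ⊆ Icc a b → ContinuousOn F (Icc c d) :=
    fun c d hcd x hx => (hF x (hcd hx)).continuousAt.continuousWithinAt
  have hderiv : ∀ c d, Icc c d ⊆ Icc a b →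
      ∀ x ∈ interior (Icc c d), HasDerivWithinAt F (w x * ψ x) (interior (Icc c d)) x :=
    fun c d hcd x hx => (hF x (hcd (interior_subset hx))).hasDerivWithinAt
  rcases le_or_gt (ψ y) 0 with hψy | hψy
  · have hsub : Icc y b ⊆ Icc a b := Icc_subset_Icc_left hy.1
    have hanti : AntitoneOn F (Icc y b) :=
      antitoneOn_of_hasDerivWithinAt_nonpos (convex_Icc y b) (hcont y b hsub) (hderiv y b hsub)
        fun x hx => by
          rw [interior_Icc] at hx
          exact mul_nonpos_of_nonneg_of_nonpos (hw x (hsub (Ioo_subset_Icc_self hx)))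
            ((hψ (hsub (left_mem_Icc.2 hy.2)) (hsub (Ioo_subset_Icc_self hx)) hx.1.le).trans hψy)
    exact min_le_of_right_le (hanti (left_mem_Icc.2 hy.2) (right_mem_Icc.2 hy.2) hy.2)
  · have hsub : Icc a y ⊆ Icc a b := Icc_subset_Icc_right hy.2
    have hmono : MonotoneOn F (Icc a y) :=
      monotoneOn_of_hasDerivWithinAt_nonneg (convex_Icc a y) (hcont a y hsub) (hderiv a y hsub)
        fun x hx => by
          rw [interior_Icc] at hx
          exact mul_nonneg (hw x (hsub (Ioo_subset_Icc_self hx))) (hψy.le.trans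
            (hψ (hsub (Ioo_subset_Icc_self hx)) (hsub (right_mem_Icc.2 hy.1)) hx.2.le))
    exact min_le_of_left_le (hmono (left_mem_Icc.2 hy.1) (right_mem_Icc.2 hy.1) hy.1)

theorem nonneg_of_hasDerivAt_mul_antitoneOn_Ioc {F w ψ : ℝ → ℝ} {a b y : ℝ} (hy : y ∈ Ioc a b)
    (hF : ∀ x ∈ Ioc a b, HasDerivAt F (w x * ψ x) x) (hw : ∀ x ∈ Ioc a b, 0 ≤ w x)
    (hψ : AntitoneOn ψ (Ioc a b)) (ha : Tendsto F (𝓝[>] a) (𝓝 0)) (hb : F b = 0) : 0 ≤ F y := by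
  have hlim : Tendsto (fun z => min (F z) (F b)) (𝓝[>] a) (𝓝 0) := by
    simpa [hb] using ha.min (tendsto_const_nhds (x := F b))
  refine le_of_tendsto hlim ?_
  filter_upwards [Ioo_mem_nhdsGT hy.1] with z hz
  have hsub : Icc z b ⊆ Ioc a b := Icc_subset_Ioc hz.1 le_rfl
  exact min_le_of_hasDerivAt_mul_antitoneOn ⟨hz.2.le, hy.2⟩ (fun x hx => hF x (hsub hx))
    (fun x hx => hw x (hsub hx)) (hψ.mono hsub)

theorem nonneg_of_hasDerivAt_mul_antitoneOn_Ici {F w ψ : ℝ → ℝ} {a y : ℝ} (hy : y ∈ Ici a)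
    (hF : ∀ x ∈ Ici a, HasDerivAt F (w x * ψ x) x) (hw : ∀ x ∈ Ici a, 0 ≤ w x)
    (hψ : AntitoneOn ψ (Ici a)) (ha : F a = 0) (hb : Tendsto F atTop (𝓝 0)) : 0 ≤ F y := by
  have hlim : Tendsto (fun z => min (F a) (F z)) atTop (𝓝 0) := by
    simpa [ha] using (tendsto_const_nhds (x := F a)).min hb
  refine le_of_tendsto hlim ?_
  filter_upwards [eventually_ge_atTop y] with z hz
  have hsub : Icc a z ⊆ Ici a := Icc_subset_Ici_self
  exact min_le_of_hasDerivAt_mul_antitoneOn ⟨hy, hz⟩ (fun x hx => hF x (hsub hx))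
    (fun x hx => hw x (hsub hx)) (hψ.mono hsub)

theorem mul_le_mul_of_hasDerivAt_of_tendsto_nhdsGT {p G g τ : ℝ → ℝ} {c a y : ℝ}
    (hy : y ∈ Ioc c a) (hp : ∀ x ∈ Ioc c a, HasDerivAt p (τ x * g x) x)
    (hG : ∀ x ∈ Ioc c a, HasDerivAt G (g x) x) (hg : ∀ x ∈ Ioc c a, 0 ≤ g x)
    (hτ : AntitoneOn τ (Ioc c a)) (hGa : 0 ≤ G a)
    (hp_lim : Tendsto p (𝓝[>] c) (𝓝 0)) (hG_lim : Tendsto G (𝓝[>] c) (𝓝 0)) :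
    G y * p a ≤ G a * p y := by
  have key := nonneg_of_hasDerivAt_mul_antitoneOn_Ioc (F := fun x => G a * p x - p a * G x)
    (ψ := fun x => G a * τ x - p a) hy
    (fun x hx => (((hp x hx).const_mul (G a)).sub ((hG x hx).const_mul (p a))).congr_deriv
      (by ring))
    hg (fun x hx z hz hxz => sub_le_sub_right (mul_le_mul_of_nonneg_left (hτ hx hz hxz) hGa) _)
    (by simpa using (hp_lim.const_mul (G a)).sub (hG_lim.const_mul (p a))) (by ring)
  linarith

theorem mul_le_mul_of_hasDerivAt_of_tendsto_atTop {p T g τ : ℝ → ℝ} {a y : ℝ}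
    (hy : y ∈ Ici a) (hp : ∀ x ∈ Ici a, HasDerivAt p (τ x * g x) x)
    (hT : ∀ x ∈ Ici a, HasDerivAt T (-g x) x) (hg : ∀ x ∈ Ici a, 0 ≤ g x)
    (hτ : AntitoneOn τ (Ici a)) (hTa : 0 ≤ T a)
    (hp_lim : Tendsto p atTop (𝓝 0)) (hT_lim : Tendsto T atTop (𝓝 0)) :
    T y * p a ≤ T a * p y := by
  have key := nonneg_of_hasDerivAt_mul_antitoneOn_Ici (F := fun x => T a * p x - p a * T x)
    (ψ := fun x => T a * τ x + p a) hy
    (fun x hx => (((hp x hx).const_mul (T a)).sub ((hT x hx).const_mul (p a))).congr_deriv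
      (by ring))
    hg (fun x hx z hz hxz => add_le_add_left (mul_le_mul_of_nonneg_left (hτ hx hz hxz) hTa) _)
    (by ring) (by simpa using (hp_lim.const_mul (T a)).sub (hT_lim.const_mul (p a)))
  linarith

section Density

variable {g : ℝ → ℝ} {y : ℝ}

theorem hasDerivAt_intervalIntegral_zero (hg : IntegrableOn g (Ioi 0))
    (hg_cont : ContinuousOn g (Ioi 0)) (hy : 0 < y) :
    HasDerivAt (fun x => ∫ t in (0 : ℝ)..x, g t) (g y) y :=
  intervalIntegral.integral_hasDerivAt_right
    ((intervalIntegrable_iff_integrableOn_Ioc_of_le hy.le).2 (hg.mono_set Ioc_subset_Ioi_self))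
    (hg_cont.stronglyMeasurableAtFilter isOpen_Ioi y hy) (hg_cont.continuousAt (Ioi_mem_nhds hy))

theorem hasDerivAt_integral_Ioi (hg : IntegrableOn g (Ioi 0))
    (hg_cont : ContinuousOn g (Ioi 0)) (hy : 0 < y) :
    HasDerivAt (fun x => ∫ t in Ioi x, g t) (-g y) y := by
  refine ((hasDerivAt_intervalIntegral_zero hg hg_cont hy).const_sub
    (∫ t in Ioi 0, g t)).congr_of_eventuallyEq ?_
  filter_upwards [Ioi_mem_nhds hy] with x hx
  rw [← intervalIntegral.integral_Ioi_sub_Ioi hg hx.le, sub_sub_cancel]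

theorem tendsto_intervalIntegral_zero_nhdsGT (hg : IntegrableOn g (Ioi 0)) :
    Tendsto (fun x => ∫ t in (0 : ℝ)..x, g t) (𝓝[>] 0) (𝓝 0) := by
  have hcont := intervalIntegral.continuousWithinAt_primitive (a := 0) (b₁ := 0) (b₂ := 1)
    (b₀ := 0) (μ := volume) (measure_singleton 0) (by
      simpa using (intervalIntegrable_iff_integrableOn_Ioc_of_le zero_le_one).2
        (hg.mono_set Ioc_subset_Ioi_self))
  have := (hcont.mono Ioo_subset_Icc_self).tendsto
  rwa [nhdsWithin_Ioo_eq_nhdsGT zero_lt_one, intervalIntegral.integral_same] at this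

theorem intervalIntegral_mul_le_mul_of_le {p τ : ℝ → ℝ} {x a : ℝ} (hg : IntegrableOn g (Ioi 0))
    (hg_cont : ContinuousOn g (Ioi 0)) (hg_nonneg : ∀ t ∈ Ioi (0 : ℝ), 0 ≤ g t)
    (hp : ∀ t ∈ Ioi (0 : ℝ), HasDerivAt p (τ t * g t) t) (hτ : AntitoneOn τ (Ioi 0))
    (hp_lim : Tendsto p (𝓝[>] 0) (𝓝 0)) (hx : 0 < x) (hxa : x ≤ a) :
    (∫ t in (0 : ℝ)..x, g t) * p a ≤ (∫ t in (0 : ℝ)..a, g t) * p x := by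
  have hGa : 0 ≤ ∫ t in (0 : ℝ)..a, g t := by
    rw [intervalIntegral.integral_of_le (hx.le.trans hxa)]
    exact setIntegral_nonneg measurableSet_Ioc fun t ht => hg_nonneg t ht.1
  exact mul_le_mul_of_hasDerivAt_of_tendsto_nhdsGT ⟨hx, hxa⟩ (fun t ht => hp t ht.1)
    (fun t ht => hasDerivAt_intervalIntegral_zero hg hg_cont ht.1) (fun t ht => hg_nonneg t ht.1)
    (hτ.mono Ioc_subset_Ioi_self) hGa hp_lim (tendsto_intervalIntegral_zero_nhdsGT hg)

theorem integral_Ioi_mul_le_mul_of_le {p τ : ℝ → ℝ} {x a : ℝ} (hg : IntegrableOn g (Ioi 0))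
    (hg_cont : ContinuousOn g (Ioi 0)) (hg_nonneg : ∀ t ∈ Ioi (0 : ℝ), 0 ≤ g t)
    (hp : ∀ t ∈ Ioi (0 : ℝ), HasDerivAt p (τ t * g t) t) (hτ : AntitoneOn τ (Ioi 0))
    (hp_lim : Tendsto p atTop (𝓝 0)) (ha : 0 < a) (hax : a ≤ x) :
    (∫ t in Ioi x, g t) * p a ≤ (∫ t in Ioi a, g t) * p x := by
  have hsub : Ici a ⊆ Ioi 0 := Ici_subset_Ioi.2 ha
  have hTa : 0 ≤ ∫ t in Ioi a, g t :=
    setIntegral_nonneg measurableSet_Ioi fun t ht => hg_nonneg t (ha.trans ht)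
  exact mul_le_mul_of_hasDerivAt_of_tendsto_atTop hax (fun t ht => hp t (hsub ht))
    (fun t ht => hasDerivAt_integral_Ioi hg hg_cont (hsub ht)) (fun t ht => hg_nonneg t (hsub ht))
    (hτ.mono hsub) hTa hp_lim (tendsto_integral_Ioi_zero tendsto_id)

end Density

theorem abs_intervalIntegral_mul_le {g k : ℝ → ℝ} {B x : ℝ} (hx : 0 ≤ x)
    (hg : IntegrableOn g (Ioi 0)) (hg_nonneg : ∀ t ∈ Ioi (0 : ℝ), 0 ≤ g t)
    (hk : ∀ t ∈ Ioi (0 : ℝ), |k t| ≤ B) :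
    |∫ t in (0 : ℝ)..x, g t * k t| ≤ B * ∫ t in (0 : ℝ)..x, g t := by
  rw [← Real.norm_eq_abs, ← intervalIntegral.integral_const_mul B]
  refine intervalIntegral.norm_integral_le_of_norm_le hx (.of_forall fun t ht => ?_)
    ((intervalIntegrable_iff_integrableOn_Ioc_of_le hx).2
      ((hg.mono_set Ioc_subset_Ioi_self).const_mul B))
  rw [Real.norm_eq_abs, abs_mul, abs_of_nonneg (hg_nonneg t ht.1), mul_comm B]
  exact mul_le_mul_of_nonneg_left (hk t ht.1) (hg_nonneg t ht.1)

theorem abs_integral_Ioi_mul_le {g k : ℝ → ℝ} {B x : ℝ} (hx : 0 ≤ x)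
    (hg : IntegrableOn g (Ioi 0)) (hg_nonneg : ∀ t ∈ Ioi (0 : ℝ), 0 ≤ g t)
    (hk : ∀ t ∈ Ioi (0 : ℝ), |k t| ≤ B) :
    |∫ t in Ioi x, g t * k t| ≤ B * ∫ t in Ioi x, g t := by
  have hsub : Ioi x ⊆ Ioi 0 := Ioi_subset_Ioi hx
  rw [← Real.norm_eq_abs, ← integral_const_mul B]
  refine norm_integral_le_of_norm_le ((hg.mono_set hsub).const_mul B)
    ((ae_restrict_iff' measurableSet_Ioi).2 (.of_forall fun t ht => ?_))
  rw [Real.norm_eq_abs, abs_mul, abs_of_nonneg (hg_nonneg t (hsub ht)), mul_comm B]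
  exact mul_le_mul_of_nonneg_left (hk t (hsub ht)) (hg_nonneg t (hsub ht))

theorem integral_mul_sub_integral_eq_zero {Ω : Type*} [MeasurableSpace Ω] {μ : Measure Ω}
    {g h : Ω → ℝ} (hg : Integrable g μ) (hhg : Integrable (fun t => h t * g t) μ)
    (hg_one : ∫ t, g t ∂μ = 1) :
    ∫ t, g t * (h t - ∫ u, h u * g u ∂μ) ∂μ = 0 := by
  simp_rw [mul_sub]
  rw [integral_sub (hhg.congr (.of_forall fun t => mul_comm _ _)) (hg.mul_const _),
    integral_mul_const, hg_one]
  simp_rw [mul_comm (g _)]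
  ring

theorem intervalIntegral_eq_neg_integral_Ioi {f : ℝ → ℝ} {a x : ℝ} (hf : IntegrableOn f (Ioi a))
    (hf_zero : ∫ t in Ioi a, f t = 0) (hx : a ≤ x) :
    ∫ t in a..x, f t = -∫ t in Ioi x, f t := by
  rw [← intervalIntegral.integral_Ioi_sub_Ioi hf hx, hf_zero, zero_sub]

theorem abs_inv_mul_le_of_mul_le_mul {I Gx Ga px pa B : ℝ} (hpx : 0 < px) (hpa : 0 < pa)
    (hB : 0 ≤ B) (hI : |I| ≤ B * Gx) (hratio : Gx * pa ≤ Ga * px) :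
    |px⁻¹ * I| ≤ pa⁻¹ * Ga * B := by
  rw [abs_mul, abs_inv, abs_of_pos hpx, inv_mul_le_iff₀ hpx]
  calc |I| ≤ B * Gx := hI
    _ ≤ px * (pa⁻¹ * Ga * B) := by
      rw [show px * (pa⁻¹ * Ga * B) = B * (Ga * px) / pa by field_simp, le_div_iff₀ hpa,
        mul_assoc]
      exact mul_le_mul_of_nonneg_left hratio hB

theorem stein_solution_uniform_bound_general
    (g : ℝ → ℝ) (s τ : Polynomial ℝ)
    (hg_pos : ∀ x ∈ Set.Ioi (0 : ℝ), 0 < g x)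
    (hg_cont : ContinuousOn g (Set.Ioi 0))
    (hg_int : ∫ x in Set.Ioi (0 : ℝ), g x = 1)
    (hode : ∀ x ∈ Set.Ioi (0 : ℝ),
      HasDerivAt (fun y => s.eval y * g y) (τ.eval x * g x) x)
    (hs_pos : ∀ x ∈ Set.Ioi (0 : ℝ), 0 < s.eval x)
    (hτ_anti : StrictAntiOn (fun x => τ.eval x) (Set.Ioi 0))
    (α : ℝ) (hα_pos : 0 < α)
    (hsg_lim0 : Tendsto (fun t => s.eval t * g t) (nhdsWithin 0 (Set.Ioi 0)) (nhds 0))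
    (hsg_limtop : Tendsto (fun t => s.eval t * g t) atTop (nhds 0))
    (h : ℝ → ℝ) (hh_cont : ContinuousOn h (Set.Ioi 0)) :
    let m := ∫ t in Set.Ioi (0 : ℝ), h t * g t
    let fh : ℝ → ℝ := fun x => (s.eval x * g x)⁻¹ * ∫ t in (0 : ℝ)..x, g t * (h t - m)
    let M := max ((s.eval α * g α)⁻¹ * ∫ t in (0 : ℝ)..α, g t)
                 ((s.eval α * g α)⁻¹ * ∫ t in Set.Ioi α, g t)
    ∀ B : ℝ, (∀ x ∈ Set.Ioi (0 : ℝ), |h x - m| ≤ B) →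
      ∀ x ∈ Set.Ioi (0 : ℝ), |fh x| ≤ M * B := by
  intro m fh M B hB x hx
  have hg : IntegrableOn g (Ioi 0) := .of_integral_ne_zero (by rw [hg_int]; exact one_ne_zero)
  have hg_nonneg : ∀ t ∈ Ioi (0 : ℝ), 0 ≤ g t := fun t ht => (hg_pos t ht).le
  have hp_pos : ∀ y ∈ Ioi (0 : ℝ), 0 < s.eval y * g y :=
    fun y hy => mul_pos (hs_pos y hy) (hg_pos y hy)
  have hB_nonneg : 0 ≤ B := (abs_nonneg _).trans (hB 1 (mem_Ioi.2 one_pos))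
  have hgk : IntegrableOn (fun t => g t * (h t - m)) (Ioi 0) :=
    hg.mul_bdd ((hh_cont.sub continuousOn_const).aestronglyMeasurable measurableSet_Ioi)
      ((ae_restrict_iff' measurableSet_Ioi).2 (.of_forall hB))
  have hhg : IntegrableOn (fun t => h t * g t) (Ioi 0) :=
    (hgk.add (hg.const_mul m)).congr_fun (fun t _ => by simp only [Pi.add_apply]; ring)
      measurableSet_Ioi
  have hτ := hτ_anti.antitoneOn
  rcases le_total x α with hxα | hαx
  · exact (abs_inv_mul_le_of_mul_le_mul (hp_pos x hx) (hp_pos α hα_pos) hB_nonneg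
      (abs_intervalIntegral_mul_le hx.le hg hg_nonneg hB)
      (intervalIntegral_mul_le_mul_of_le hg hg_cont hg_nonneg hode hτ hsg_lim0 hx hxα)).trans
      (mul_le_mul_of_nonneg_right (le_max_left _ _) hB_nonneg)
  · have hI : |∫ t in (0 : ℝ)..x, g t * (h t - m)| ≤ B * ∫ t in Ioi x, g t := by
      rw [intervalIntegral_eq_neg_integral_Ioi hgk
        (integral_mul_sub_integral_eq_zero hg hhg hg_int) hx.le, abs_neg]
      exact abs_integral_Ioi_mul_le hx.le hg hg_nonneg hB
    exact (abs_inv_mul_le_of_mul_le_mul (hp_pos x hx) (hp_pos α hα_pos) hB_nonneg hI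
      (integral_Ioi_mul_le_mul_of_le hg hg_cont hg_nonneg hode hτ hsg_limtop hα_pos hαx)).trans
      (mul_le_mul_of_nonneg_right (le_max_right _ _) hB_nonneg)

/-- uniform bound on the solution of the Stein equation:
`sup_{x>0} |f_h(x)| ≤ M · sup_{x>0} |h(x) − m_h|` with
`M = max( (s(α)g(α))⁻¹ ∫₀^α g , (s(α)g(α))⁻¹ ∫_α^∞ g )`.
(The supremum bound is expressed via arbitrary upper bounds `B` of `|h − m_h|`.) -/
theorem stein_solution_uniform_bound
    (g : ℝ → ℝ) (s τ : Polynomial ℝ)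
    (hg_pos : ∀ x ∈ Set.Ioi (0 : ℝ), 0 < g x)
    (hg_cont : ContinuousOn g (Set.Ioi 0))
    (hg_int : ∫ x in Set.Ioi (0 : ℝ), g x = 1)
    (hode : ∀ x ∈ Set.Ioi (0 : ℝ),
      HasDerivAt (fun y => s.eval y * g y) (τ.eval x * g x) x)
    (hs_pos : ∀ x ∈ Set.Ioi (0 : ℝ), 0 < s.eval x)
    (hτ_anti : StrictAntiOn (fun x => τ.eval x) (Set.Ioi 0))
    (α : ℝ) (hα_pos : 0 < α) (hα_zero : τ.eval α = 0)
    (hα_unique : ∀ x ∈ Set.Ioi (0 : ℝ), τ.eval x = 0 → x = α)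
    (hsg_lim0 : Tendsto (fun t => s.eval t * g t) (nhdsWithin 0 (Set.Ioi 0)) (nhds 0))
    (hsg_limtop : Tendsto (fun t => s.eval t * g t) atTop (nhds 0))
    (h : ℝ → ℝ) (hh_cont : ContinuousOn h (Set.Ioi 0))
    (hh_bdd : ∃ C, ∀ x ∈ Set.Ioi (0 : ℝ), |h x| ≤ C) :
    let m := ∫ t in Set.Ioi (0 : ℝ), h t * g t
    let fh : ℝ → ℝ := fun x => (s.eval x * g x)⁻¹ * ∫ t in (0 : ℝ)..x, g t * (h t - m)
    let M := max ((s.eval α * g α)⁻¹ * ∫ t in (0 : ℝ)..α, g t)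
                 ((s.eval α * g α)⁻¹ * ∫ t in Set.Ioi α, g t)
    ∀ B : ℝ, (∀ x ∈ Set.Ioi (0 : ℝ), |h x - m| ≤ B) →
      ∀ x ∈ Set.Ioi (0 : ℝ), |fh x| ≤ M * B :=
  stein_solution_uniform_bound_general g s τ hg_pos hg_cont hg_int hode hs_pos hτ_anti α hα_pos
    hsg_lim0 hsg_limtop h hh_cont
end

section
/- Let p ∈ ℝ, a > 0, b > 0, let h : (0,∞) → ℝ be bounded and continuous, and set m_h = ∫₀^∞ h(t) g_{p,a,b}(t) dt. Then the function f_h defined on (0,∞) by f_h(x) = (1/(x² g_{p,a,b}(x))) ∫₀ˣ g_{p,a,b}(t)(h(t) − m_h) dt = −(1/(x² g_{p,a,b}(x))) ∫ₓ^∞ g_{p,a,b}(t)(h(t) − m_h) dt is differentiable and satisfies the GIG Stein equation x² f_h′(x) + (b/2 + (p+1)x − (a/2)x²) f_h(x) = h(x) − m_h for all x > 0. -/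
/-! For the GIG density `g` one has `(x² g)' = (b/2 + (p+1)x − (a/2)x²) g`, so the left side of the
Stein equation is `(x² g f)' / g`, and `f_h = (x² g)⁻¹ ∫₀ˣ g (h − m_h)` solves it by the fundamental
theorem of calculus. The two expressions for `f_h` agree because `g (h − m_h)` has integral zero.
Integrability of the unnormalized density comes from `exp (-b/(2t)) ≤ (2rt/b)^r`, which dominates it
by a Gamma integrand. -/

open MeasureTheory Set Filter Real

open scoped Topology

/-- The generalized inverse Gaussian density with parameters `p ∈ ℝ`, `a > 0`, `b > 0`
(normalized by its total mass). -/
noncomputable def gigDensity (p a b : ℝ) (x : ℝ) : ℝ :=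
  (∫ t in Set.Ioi (0 : ℝ), t ^ (p - 1) * Real.exp (-(a * t + b / t) / 2))⁻¹ *
    (x ^ (p - 1) * Real.exp (-(a * x + b / x) / 2))

lemma exp_neg_le_div_rpow {r x : ℝ} (hr : 0 < r) (hx : 0 < x) : exp (-x) ≤ (r / x) ^ r := by
  have hpow : (x / r) ^ r ≤ exp x := by
    calc (x / r) ^ r ≤ exp (x / r) ^ r := by
          gcongr
          linarith [add_one_le_exp (x / r)]
      _ = exp x := by rw [← exp_mul, div_mul_cancel₀ x hr.ne']
  rw [exp_neg, ← inv_div, inv_rpow (div_pos hx hr).le]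
  exact inv_anti₀ (by positivity) hpow

noncomputable def gigKernel (p a b x : ℝ) : ℝ := x ^ (p - 1) * exp (-(a * x + b / x) / 2)

lemma gigDensity_eq (p a b x : ℝ) :
    gigDensity p a b x = (∫ t in Ioi 0, gigKernel p a b t)⁻¹ * gigKernel p a b x := rfl

section gigKernel

variable {p a b : ℝ}

lemma gigKernel_pos {x : ℝ} (hx : 0 < x) : 0 < gigKernel p a b x := by
  unfold gigKernel; positivity

lemma gigKernel_le (hb : 0 < b) {r t : ℝ} (hr : 0 < r) (ht : 0 < t) :
    gigKernel p a b t ≤ (2 * r / b) ^ r * (t ^ (p - 1 + r) * exp (-(a / 2) * t)) := by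
  have hexp : exp (-(b / (2 * t))) ≤ (2 * r / b) ^ r * t ^ r := by
    calc exp (-(b / (2 * t))) ≤ (r / (b / (2 * t))) ^ r := exp_neg_le_div_rpow hr (by positivity)
      _ = (2 * r / b) ^ r * t ^ r := by
        rw [← mul_rpow (by positivity) ht.le]; congr 1; field_simp
  calc gigKernel p a b t = t ^ (p - 1) * exp (-(a / 2) * t) * exp (-(b / (2 * t))) := by
        rw [gigKernel, mul_assoc, ← exp_add]; congr 2; field_simp; ring
    _ ≤ t ^ (p - 1) * exp (-(a / 2) * t) * ((2 * r / b) ^ r * t ^ r) := by gcongr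
    _ = _ := by rw [rpow_add ht]; ring

lemma hasDerivAt_gigKernel {x : ℝ} (hx : 0 < x) :
    HasDerivAt (gigKernel p a b) (((p - 1) / x + (b / x ^ 2 - a) / 2) * gigKernel p a b x) x := by
  have hpow : HasDerivAt (fun y => y ^ (p - 1)) ((p - 1) * x ^ (p - 1 - 1)) x :=
    hasDerivAt_rpow_const (Or.inl hx.ne')
  have hexp : HasDerivAt (fun y => exp (-(a * y + b / y) / 2))
      (exp (-(a * x + b / x) / 2) * ((b / x ^ 2 - a) / 2)) x := by
    refine HasDerivAt.exp ?_
    refine ((((hasDerivAt_id x).const_mul a).add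
      ((hasDerivAt_const x b).div (hasDerivAt_id x) hx.ne')).neg.div_const 2).congr_deriv ?_
    simp only [id]
    field_simp
    ring
  refine (hpow.mul hexp).congr_deriv ?_
  rw [gigKernel, rpow_sub_one hx.ne']
  field_simp

lemma continuousOn_gigKernel : ContinuousOn (gigKernel p a b) (Ioi 0) := fun _ hx =>
  (hasDerivAt_gigKernel hx).continuousAt.continuousWithinAt

lemma integrableOn_gigKernel (ha : 0 < a) (hb : 0 < b) :
    IntegrableOn (gigKernel p a b) (Ioi 0) := by
  have hr : 0 < |p| + 1 := by positivity
  have hdom := (integrableOn_rpow_mul_exp_neg_mul_rpow (s := p - 1 + (|p| + 1))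
    (by linarith [neg_abs_le p]) zero_lt_one (half_pos ha)).const_mul
      ((2 * (|p| + 1) / b) ^ (|p| + 1))
  simp only [rpow_one] at hdom
  refine hdom.mono' (continuousOn_gigKernel.aestronglyMeasurable measurableSet_Ioi) ?_
  filter_upwards [self_mem_ae_restrict measurableSet_Ioi] with t ht
  rw [norm_of_nonneg (gigKernel_pos ht).le]
  exact gigKernel_le hb hr ht

lemma integral_gigKernel_pos (ha : 0 < a) (hb : 0 < b) :
    0 < ∫ t in Ioi 0, gigKernel p a b t := by
  have hsupp : Function.support (gigKernel p a b) ∩ Ioi 0 = Ioi 0 :=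
    inter_eq_right.mpr fun _ hx => (gigKernel_pos (mem_Ioi.mp hx)).ne'
  rw [setIntegral_pos_iff_support_of_nonneg_ae _ (integrableOn_gigKernel ha hb), hsupp, volume_Ioi]
  · exact ENNReal.zero_lt_top
  · filter_upwards [self_mem_ae_restrict measurableSet_Ioi] with t ht
    exact (gigKernel_pos ht).le

end gigKernel

section gigDensity

variable {p a b : ℝ}

lemma gigDensity_pos (ha : 0 < a) (hb : 0 < b) {x : ℝ} (hx : 0 < x) : 0 < gigDensity p a b x :=
  mul_pos (inv_pos.mpr (integral_gigKernel_pos ha hb)) (gigKernel_pos hx)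

lemma continuousOn_gigDensity : ContinuousOn (gigDensity p a b) (Ioi 0) :=
  continuousOn_const.mul continuousOn_gigKernel

lemma integrableOn_gigDensity (ha : 0 < a) (hb : 0 < b) : IntegrableOn (gigDensity p a b) (Ioi 0) :=
  (integrableOn_gigKernel ha hb).const_mul _

lemma integral_gigDensity (ha : 0 < a) (hb : 0 < b) : ∫ t in Ioi 0, gigDensity p a b t = 1 := by
  simp_rw [gigDensity_eq]
  rw [integral_const_mul, inv_mul_cancel₀ (integral_gigKernel_pos ha hb).ne']

lemma hasDerivAt_sq_mul_gigDensity {x : ℝ} (hx : 0 < x) :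
    HasDerivAt (fun y => y ^ 2 * gigDensity p a b y)
      ((b / 2 + (p + 1) * x - a / 2 * x ^ 2) * gigDensity p a b x) x := by
  have hg : HasDerivAt (gigDensity p a b)
      (((p - 1) / x + (b / x ^ 2 - a) / 2) * gigDensity p a b x) x := by
    refine ((hasDerivAt_gigKernel hx).const_mul (∫ t in Ioi 0, gigKernel p a b t)⁻¹).congr_deriv ?_
    rw [gigDensity_eq]
    ring
  refine ((hasDerivAt_pow 2 x).mul hg).congr_deriv ?_
  field_simp
  ring

end gigDensity

lemma IntegrableOn.bdd_continuousOn_mul {μ : Measure ℝ} {s : Set ℝ} {g h : ℝ → ℝ}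
    (hg : IntegrableOn g s μ) (hs : MeasurableSet s) (hh : ContinuousOn h s)
    (hbdd : ∃ C, ∀ x ∈ s, |h x| ≤ C) : IntegrableOn (fun t => h t * g t) s μ := by
  obtain ⟨C, hC⟩ := hbdd
  refine hg.bdd_mul (c := C) (hh.aestronglyMeasurable hs) ?_
  filter_upwards [self_mem_ae_restrict hs] with t ht
  exact hC t ht

lemma integral_mul_sub_integral_mul_eq_zero {α : Type*} [MeasurableSpace α] {μ : Measure α}
    {g h : α → ℝ} (hg : Integrable g μ) (hg_one : ∫ t, g t ∂μ = 1)
    (hhg : Integrable (fun t => h t * g t) μ) :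
    ∫ t, g t * (h t - ∫ u, h u * g u ∂μ) ∂μ = 0 := by
  simp_rw [mul_sub]
  rw [integral_sub (by simpa only [mul_comm] using hhg) (hg.mul_const _), integral_mul_const,
    hg_one]
  simp_rw [mul_comm (g _)]
  ring

lemma hasDerivAt_inv_mul_intervalIntegral {ψ G : ℝ → ℝ} {a x G' : ℝ}
    (hψ : IntervalIntegrable ψ volume a x) (hψ_meas : StronglyMeasurableAtFilter ψ (𝓝 x))
    (hψ_cont : ContinuousAt ψ x) (hG : HasDerivAt G G' x) (hGx : G x ≠ 0) :
    HasDerivAt (fun y => (G y)⁻¹ * ∫ t in a..y, ψ t)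
      ((G x)⁻¹ * (ψ x - G' * ((G x)⁻¹ * ∫ t in a..x, ψ t))) x := by
  refine ((hG.inv hGx).mul
    (intervalIntegral.integral_hasDerivAt_right hψ hψ_meas hψ_cont)).congr_deriv ?_
  simp only [Pi.inv_apply]
  field_simp
  ring

/-- the function
`f_h(x) = (x² g_{p,a,b}(x))⁻¹ ∫₀ˣ g_{p,a,b}(t)(h(t) − m_h) dt`
equals `−(x² g_{p,a,b}(x))⁻¹ ∫ₓ^∞ g_{p,a,b}(t)(h(t) − m_h) dt`, is differentiable, and
solves the GIG Stein equation on `(0,∞)`. -/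
theorem gig_stein_equation_solution (p a b : ℝ) (ha : 0 < a) (hb : 0 < b)
    (h : ℝ → ℝ) (hh_cont : ContinuousOn h (Set.Ioi 0))
    (hh_bdd : ∃ C, ∀ x ∈ Set.Ioi (0 : ℝ), |h x| ≤ C) :
    let m := ∫ t in Set.Ioi (0 : ℝ), h t * gigDensity p a b t
    let fh : ℝ → ℝ := fun x =>
      (x ^ 2 * gigDensity p a b x)⁻¹ * ∫ t in (0 : ℝ)..x, gigDensity p a b t * (h t - m)
    ∀ x ∈ Set.Ioi (0 : ℝ),
      (fh x = -((x ^ 2 * gigDensity p a b x)⁻¹ *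
        ∫ t in Set.Ioi x, gigDensity p a b t * (h t - m))) ∧
      DifferentiableAt ℝ fh x ∧
      x ^ 2 * deriv fh x + (b / 2 + (p + 1) * x - a / 2 * x ^ 2) * fh x = h x - m := by
  intro m fh x hx
  set ψ := fun t => gigDensity p a b t * (h t - m)
  have hg := integrableOn_gigDensity (p := p) ha hb
  have hhg := IntegrableOn.bdd_continuousOn_mul hg measurableSet_Ioi hh_cont hh_bdd
  have hψ_int : IntegrableOn ψ (Ioi 0) :=
    (hhg.sub (hg.mul_const m)).congr_fun (fun t _ => by simp only [ψ, Pi.sub_apply]; ring)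
      measurableSet_Ioi
  have hψ_cont : ContinuousOn ψ (Ioi 0) :=
    continuousOn_gigDensity.mul (hh_cont.sub continuousOn_const)
  have hψ_zero : ∫ t in Ioi 0, ψ t = 0 :=
    integral_mul_sub_integral_mul_eq_zero hg (integral_gigDensity ha hb) hhg
  have hgx : 0 < gigDensity p a b x := gigDensity_pos ha hb hx
  have hfh : HasDerivAt fh _ x := hasDerivAt_inv_mul_intervalIntegral
    ((intervalIntegrable_iff_integrableOn_Ioc_of_le hx.le).mpr
      (hψ_int.mono_set Ioc_subset_Ioi_self))
    (hψ_cont.stronglyMeasurableAtFilter isOpen_Ioi x hx) (hψ_cont.continuousAt (Ioi_mem_nhds hx))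
    (hasDerivAt_sq_mul_gigDensity hx)
    (mul_pos (pow_pos hx 2) hgx).ne'
  refine ⟨?_, hfh.differentiableAt, ?_⟩
  · show _ * _ = _
    rw [← intervalIntegral.integral_Ioi_sub_Ioi hψ_int hx.le, hψ_zero, zero_sub, mul_neg]
  · have hx0 : x ≠ 0 := hx.ne'
    rw [hfh.deriv]
    simp only [fh]
    field_simp
    ring
end

section
/- For a > 0, b ∈ ℝ, c > 0, the Kummer density k_{a,b,c} satisfies, with s(x) = x(1+x) and τ(x) = (1−b)x − c x(1+x) + a, the differential equation (s·k_{a,b,c})′(x) = τ(x)·k_{a,b,c}(x) for all x > 0; moreover lim_{x→0⁺} x(1+x) k_{a,b,c}(x) = 0 and lim_{x→∞} x(1+x) k_{a,b,c}(x) = 0. -/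
open MeasureTheory Set Filter Real

/-- The Kummer density with parameters `a > 0`, `b ∈ ℝ`, `c > 0`
(normalized by its total mass). -/
noncomputable def kummerDensity (a b c : ℝ) (x : ℝ) : ℝ :=
  (∫ t in Set.Ioi (0 : ℝ), t ^ (a - 1) * (1 + t) ^ (-a - b) * Real.exp (-(c * t)))⁻¹ *
    (x ^ (a - 1) * (1 + x) ^ (-a - b) * Real.exp (-(c * x)))

/-!
On `(0, ∞)` the product `x (1 + x) k_{a,b,c}(x)` equals, up to the normalising constant,
`x ^ a (1 + x) ^ (1 - a - b) e^{-cx}`. Its logarithmic derivative is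
`a / x + (1 - a - b) / (1 + x) - c`, and multiplying by `x (1 + x)` gives `τ(x)`.
The factor `x ^ a` forces the limit `0` at `0⁺` when `a > 0`, and the factor `e^{-cx}`
beats every power of `x` at `∞` when `c > 0`.
-/

open Topology

/-- The unnormalised Kummer density. -/
noncomputable def kummerKernel (a b c x : ℝ) : ℝ :=
  x ^ (a - 1) * (1 + x) ^ (-a - b) * exp (-(c * x))

theorem kummerDensity_eq (a b c x : ℝ) :
    kummerDensity a b c x = (∫ t in Ioi (0 : ℝ), kummerKernel a b c t)⁻¹ * kummerKernel a b c x :=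
  rfl

section KummerKernel

variable {a b c x : ℝ}

theorem kummerKernel_eq_div (hx : 0 < x) :
    kummerKernel a b c x = x ^ a * (1 + x) ^ (1 - a - b) * exp (-(c * x)) / (x * (1 + x)) := by
  have h1x : 0 < 1 + x := by linarith
  rw [kummerKernel, show -a - b = 1 - a - b - 1 by ring, rpow_sub_one h1x.ne',
    rpow_sub_one hx.ne']
  field_simp

theorem mul_one_add_mul_kummerKernel (hx : 0 < x) :
    x * (1 + x) * kummerKernel a b c x = x ^ a * (1 + x) ^ (1 - a - b) * exp (-(c * x)) := by
  rw [kummerKernel_eq_div hx]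
  field_simp

theorem hasDerivAt_mul_one_add_mul_kummerKernel (hx : 0 < x) :
    HasDerivAt (fun y => y * (1 + y) * kummerKernel a b c y)
      (((1 - b) * x - c * x * (1 + x) + a) * kummerKernel a b c x) x := by
  have h1x : 0 < 1 + x := by linarith
  have hpow : HasDerivAt (fun y => y ^ a) (a * x ^ (a - 1)) x :=
    hasDerivAt_rpow_const (Or.inl hx.ne')
  have hpow' : HasDerivAt (fun y => (1 + y) ^ (1 - a - b))
      (1 * (1 - a - b) * (1 + x) ^ (1 - a - b - 1)) x :=
    ((hasDerivAt_id x).const_add 1).rpow_const (Or.inl h1x.ne')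
  have hexp : HasDerivAt (fun y => exp (-(c * y))) (exp (-(c * x)) * -c) x :=
    ((hasDerivAt_id x).const_mul c).neg.exp.congr_deriv (by simp)
  have hlocal : (fun y => y * (1 + y) * kummerKernel a b c y)
      =ᶠ[𝓝 x] fun y => y ^ a * (1 + y) ^ (1 - a - b) * exp (-(c * y)) :=
    eventually_of_mem (Ioi_mem_nhds hx) fun y hy => mul_one_add_mul_kummerKernel hy
  refine ((hpow.mul hpow').mul hexp).congr_of_eventuallyEq hlocal |>.congr_deriv ?_
  rw [Pi.mul_apply, kummerKernel_eq_div hx, rpow_sub_one hx.ne', rpow_sub_one h1x.ne']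
  field_simp
  ring

theorem tendsto_mul_one_add_mul_kummerKernel_nhdsGT_zero (ha : 0 < a) :
    Tendsto (fun x => x * (1 + x) * kummerKernel a b c x) (𝓝[>] 0) (𝓝 0) := by
  have hcont : ContinuousAt (fun x => x ^ a * (1 + x) ^ (1 - a - b) * exp (-(c * x))) 0 := by
    refine ((continuousAt_rpow_const 0 a (Or.inr ha.le)).mul ?_).mul (by fun_prop)
    exact ContinuousAt.rpow_const (by fun_prop) (Or.inl (by norm_num))
  have hlim := hcont.continuousWithinAt (s := Ioi 0)
  rw [ContinuousWithinAt, zero_rpow ha.ne', zero_mul, zero_mul] at hlim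
  exact hlim.congr' <| eventually_nhdsWithin_of_forall fun x hx =>
    (mul_one_add_mul_kummerKernel hx).symm

theorem tendsto_mul_one_add_mul_kummerKernel_atTop (hc : 0 < c) :
    Tendsto (fun x => x * (1 + x) * kummerKernel a b c x) atTop (𝓝 0) := by
  -- Split `e^{-cx} = e^{-(c/2)x} · e^{-(c/2)(1+x)} · e^{c/2}` and let each half kill one power.
  have hdecay : Tendsto (fun x => x ^ a * exp (-(c / 2) * x)) atTop (𝓝 0) :=
    tendsto_rpow_mul_exp_neg_mul_atTop_nhds_zero a (c / 2) (by linarith)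
  have hdecay' : Tendsto (fun x => (1 + x) ^ (1 - a - b) * exp (-(c / 2) * (1 + x))) atTop (𝓝 0) :=
    (tendsto_rpow_mul_exp_neg_mul_atTop_nhds_zero (1 - a - b) (c / 2) (by linarith)).comp
      (tendsto_atTop_add_const_left atTop 1 tendsto_id)
  have hprod := (hdecay.mul hdecay').mul_const (exp (c / 2))
  rw [zero_mul, zero_mul] at hprod
  refine hprod.congr' ?_
  filter_upwards [eventually_gt_atTop 0] with x hx
  rw [mul_one_add_mul_kummerKernel hx, show -(c * x) = -(c / 2) * x + -(c / 2) * (1 + x) + c / 2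
    by ring, exp_add, exp_add]
  ring

end KummerKernel

/-- the Kummer density satisfies, with `s(x) = x(1+x)` and
`τ(x) = (1−b)x − cx(1+x) + a`, the equation `(s·k_{a,b,c})' = τ·k_{a,b,c}` on `(0,∞)`;
moreover `x(1+x)k_{a,b,c}(x) → 0` as `x → 0⁺` and as `x → ∞`. -/
theorem kummer_ode_and_boundary_limits (a b c : ℝ) (ha : 0 < a) (hc : 0 < c) :
    (∀ x ∈ Set.Ioi (0 : ℝ),
      HasDerivAt (fun y => y * (1 + y) * kummerDensity a b c y)
        (((1 - b) * x - c * x * (1 + x) + a) * kummerDensity a b c x) x) ∧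
    Tendsto (fun x => x * (1 + x) * kummerDensity a b c x)
      (nhdsWithin 0 (Set.Ioi 0)) (nhds 0) ∧
    Tendsto (fun x => x * (1 + x) * kummerDensity a b c x) atTop (nhds 0) := by
  set K := (∫ t in Ioi (0 : ℝ), kummerKernel a b c t)⁻¹
  have hscale : (fun x => x * (1 + x) * kummerDensity a b c x) =
      fun x => K * (x * (1 + x) * kummerKernel a b c x) := by
    ext x
    rw [kummerDensity_eq]
    ring
  rw [hscale]
  refine ⟨fun x hx => ?_, ?_, ?_⟩
  · rw [kummerDensity_eq, mul_left_comm]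
    exact (hasDerivAt_mul_one_add_mul_kummerKernel hx).const_mul K
  · simpa only [mul_zero] using
      (tendsto_mul_one_add_mul_kummerKernel_nhdsGT_zero (b := b) (c := c) ha).const_mul K
  · simpa only [mul_zero] using
      (tendsto_mul_one_add_mul_kummerKernel_atTop (a := a) (b := b) hc).const_mul K
end
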